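/- Assume the jump condition holds: a_k·H + b_k ≥ H·(c_k·H + d_k) for all k = 1, …, n (equivalently, each purification protocol does not decrease the fidelity of a freshly generated link, J_k(F_new) ≥ F_new). Then the average consumed fidelity of the 1GnB buffer is a non-decreasing function of the purification probability: for all 0 ≤ q₁ ≤ q₂ ≤ 1, F̄(q₁) ≤ F̄(q₂). (Proposition 2 of the paper.) -/
import Mathlib


/-- Binomial weight `w_k = (n choose k)·p_gen^k·(1 − p_gen)^(n−k)`. -/
noncomputable def wgt (n : ℕ) (p : ℝ) (k : ℕ) : ℝ :=
  (n.choose k : ℝ) * p ^ k * (1 - p) ^ (n - k)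

/-- Aggregated coefficient, e.g. `ã = Σ_{k=1}^n a_k·w_k`. -/
noncomputable def agg (n : ℕ) (p : ℝ) (f : ℕ → ℝ) : ℝ :=
  ∑ k ∈ Finset.Icc 1 n, f k * wgt n p k

/-- Admissibility constraints on the purification coefficients
`a_k, b_k, c_k, d_k` for `k = 1, …, n`. -/
def Admissible (n : ℕ) (a b c d : ℕ → ℝ) : Prop :=
  ∀ k ∈ Finset.Icc 1 n,
    (0 ≤ d k ∧ d k ≤ 1) ∧
    (-(4/3) * d k ≤ c k ∧ c k ≤ (4/3) * (1 - d k)) ∧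
    (0 ≤ b k ∧ b k ≤ (3/4) * d k) ∧
    (-(4/3) * b k ≤ a k ∧ a k ≤ -(4/3) * b k + (3/4) * c k + d k)

lemma sum_wgt (n : ℕ) (p : ℝ) :
    ∑ k ∈ Finset.Icc 1 n, wgt n p k = 1 - (1 - p) ^ n := by
  have h : (p + (1 - p)) ^ n = ∑ k ∈ Finset.range (n + 1), p ^ k * (1 - p) ^ (n - k) * n.choose k :=
    add_pow p (1 - p) n
  have h2 : (1 : ℝ) = ∑ k ∈ Finset.range (n + 1), wgt n p k := by
    have : p + (1 - p) = 1 := by ring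
    rw [this, one_pow] at h
    rw [h]
    exact Finset.sum_congr rfl fun k _ => by unfold wgt; ring
  have h3 : ∑ k ∈ Finset.range (n + 1), wgt n p k
      = wgt n p 0 + ∑ k ∈ Finset.Icc 1 n, wgt n p k := by
    rw [Finset.sum_range_succ' (wgt n p) n]
    rw [show Finset.Icc 1 n = Finset.Ico 1 (n + 1) from rfl, Finset.sum_Ico_eq_sum_range]
    simp [add_comm]
  have h0 : wgt n p 0 = (1 - p) ^ n := by simp [wgt]
  rw [h3, h0] at h2; linarith

/-- Proposition 2: If each purification protocol does not
decrease the fidelity of a freshly generated link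
(`a_k·H + b_k ≥ H·(c_k·H + d_k)` for all `k`), then the average consumed
fidelity `F̄` of the 1GnB buffer is non-decreasing in the purification
probability `q` on `[0,1]`. -/
theorem avg_consumed_fidelity_monotone
    (n : ℕ) (hn : 1 ≤ n) (p : ℝ) (hp : p ∈ Set.Icc (0:ℝ) 1)
    (a b c d : ℕ → ℝ) (hadm : Admissible n a b c d)
    (pcon Γ γ Fnew H : ℝ) (hpcon : pcon ∈ Set.Ioc (0:ℝ) 1) (hΓ : 0 ≤ Γ)
    (hγ : γ = Real.exp Γ - 1) (hFnew : Fnew ∈ Set.Icc (1/4 : ℝ) 1)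
    (hH : H = Fnew - 1/4)
    (P aa bb cc dd : ℝ)
    (hP : P = 1 - (1 - p) ^ n)
    (haa : aa = agg n p a) (hbb : bb = agg n p b)
    (hcc : cc = agg n p c) (hdd : dd = agg n p d)
    (Fbar : ℝ → ℝ)
    (hF : ∀ q, Fbar q =
      ((pcon + q * (1 - pcon) * (P + cc / 4 - dd)) * Fnew
        + (1/4) * (γ + q * (1 - pcon) * (-aa + 4 * bb - cc / 4 + dd)))
      / ((q * (1 - pcon) * cc) * Fnew
        + (γ + pcon + q * (1 - pcon) * (P - aa - cc / 4))))
    (hjump : ∀ k ∈ Finset.Icc 1 n, H * (c k * H + d k) ≤ a k * H + b k)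
    : ∀ q₁ q₂ : ℝ, 0 ≤ q₁ → q₁ ≤ q₂ → q₂ ≤ 1 → Fbar q₁ ≤ Fbar q₂ := by
  have hγ0 : 0 ≤ γ := by rw [hγ]; nlinarith [Real.add_one_le_exp Γ]
  have hH0 : 0 ≤ H := by rw [hH]; linarith [hFnew.1]
  have hH34 : H ≤ 3/4 := by rw [hH]; linarith [hFnew.2]
  have hs : 0 ≤ 1 - pcon := by linarith [hpcon.2]
  have hpc0 : 0 < pcon := hpcon.1
  have hw : ∀ k, 0 ≤ wgt n p k := fun k =>
    mul_nonneg (mul_nonneg (by positivity) (pow_nonneg hp.1 _))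
      (pow_nonneg (by linarith [hp.2]) _)
  have hsumw : ∑ k ∈ Finset.Icc 1 n, wgt n p k = P := by rw [hP]; exact sum_wgt n p
  have key : ∀ (f : ℕ → ℝ), (∀ k ∈ Finset.Icc 1 n, 0 ≤ f k) →
      0 ≤ ∑ k ∈ Finset.Icc 1 n, f k * wgt n p k := fun f hf =>
    Finset.sum_nonneg fun k hk => mul_nonneg (hf k hk) (hw k)
  have hE : 0 ≤ P - aa + cc * H := by
    have heq : P - aa + cc * H
        = ∑ k ∈ Finset.Icc 1 n, (1 - a k + c k * H) * wgt n p k := by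
      rw [← hsumw, haa, hcc]; unfold agg
      rw [Finset.sum_mul, ← Finset.sum_sub_distrib, ← Finset.sum_add_distrib]
      exact Finset.sum_congr rfl fun k _ => by ring
    rw [heq]
    refine key _ fun k hk => ?_
    obtain ⟨⟨hd0, hd1⟩, ⟨hc1, hc2⟩, ⟨hb0, hb1⟩, ⟨ha1, ha2⟩⟩ := hadm k hk
    nlinarith [mul_nonneg (by linarith : (0:ℝ) ≤ 3/4 - H)
        (by linarith : (0:ℝ) ≤ 4/3 * (1 - d k) - c k),
      mul_nonneg hH0 (by linarith : (0:ℝ) ≤ 1 - d k)]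
  have hT1 : 0 ≤ P * H + bb - dd * H := by
    have heq : P * H + bb - dd * H
        = ∑ k ∈ Finset.Icc 1 n, (H + b k - d k * H) * wgt n p k := by
      rw [← hsumw, hbb, hdd]; unfold agg
      rw [Finset.sum_mul, Finset.sum_mul, ← Finset.sum_add_distrib, ← Finset.sum_sub_distrib]
      exact Finset.sum_congr rfl fun k _ => by ring
    rw [heq]
    refine key _ fun k hk => ?_
    obtain ⟨⟨hd0, hd1⟩, _, ⟨hb0, _⟩, _⟩ := hadm k hk
    nlinarith [mul_nonneg hH0 (by linarith : (0:ℝ) ≤ 1 - d k)]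
  have hT2 : 0 ≤ aa * H + bb - H * (cc * H + dd) := by
    have heq : aa * H + bb - H * (cc * H + dd)
        = ∑ k ∈ Finset.Icc 1 n, (a k * H + b k - H * (c k * H + d k)) * wgt n p k := by
      rw [haa, hbb, hcc, hdd]; unfold agg
      rw [Finset.sum_mul]
      rw [show (∑ k ∈ Finset.Icc 1 n, c k * wgt n p k) * H + ∑ k ∈ Finset.Icc 1 n, d k * wgt n p k
        = ∑ k ∈ Finset.Icc 1 n, (c k * wgt n p k * H + d k * wgt n p k) from by
          rw [Finset.sum_add_distrib, Finset.sum_mul]]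
      rw [Finset.mul_sum, ← Finset.sum_add_distrib, ← Finset.sum_sub_distrib]
      exact Finset.sum_congr rfl fun k _ => by ring
    rw [heq]
    exact key _ fun k hk => by linarith [hjump k hk]
  have hFH : Fnew = H + 1/4 := by rw [hH]; ring
  have hDpos : ∀ q : ℝ, 0 ≤ q →
      0 < (q * (1 - pcon) * cc) * Fnew + (γ + pcon + q * (1 - pcon) * (P - aa - cc / 4)) := by
    intro q hq
    have h1 : 0 ≤ q * (1 - pcon) * (P - aa + cc * H) :=
      mul_nonneg (mul_nonneg hq hs) hE
    rw [hFH]; nlinarith [h1]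
  intro q₁ q₂ hq1 h12 hq2
  rw [hF q₁, hF q₂, div_le_div_iff₀ (hDpos q₁ hq1) (hDpos q₂ (le_trans hq1 h12))]
  have hkey :
      ((pcon + q₂ * (1 - pcon) * (P + cc / 4 - dd)) * Fnew
        + (1/4) * (γ + q₂ * (1 - pcon) * (-aa + 4 * bb - cc / 4 + dd)))
      * ((q₁ * (1 - pcon) * cc) * Fnew + (γ + pcon + q₁ * (1 - pcon) * (P - aa - cc / 4)))
      - ((pcon + q₁ * (1 - pcon) * (P + cc / 4 - dd)) * Fnew
        + (1/4) * (γ + q₁ * (1 - pcon) * (-aa + 4 * bb - cc / 4 + dd)))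
      * ((q₂ * (1 - pcon) * cc) * Fnew + (γ + pcon + q₂ * (1 - pcon) * (P - aa - cc / 4)))
      = (q₂ - q₁) * (1 - pcon) * (γ * (P * H + bb - dd * H)
          + pcon * (aa * H + bb - H * (cc * H + dd))) := by
    rw [hFH]; ring
  have h1 : 0 ≤ (q₂ - q₁) * (1 - pcon) * (γ * (P * H + bb - dd * H)
      + pcon * (aa * H + bb - H * (cc * H + dd))) :=
    mul_nonneg (mul_nonneg (by linarith) hs)
      (add_nonneg (mul_nonneg hγ0 hT1) (mul_nonneg hpc0.le hT2))
  linarith [hkey, h1]
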